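/- arXiv:1409.2913 — 3 statements merged into one kernel-verified Lean document; each statement's English description precedes it below -/
import Mathlib

section
/- For every η > 0, the standard n-dimensional Gaussian measure of the centered Euclidean ball of radius √n − η is at most e^{−η²/2}. -/
open MeasureTheory Real

/-- The standard Gaussian measure on `ℝⁿ`, with density `(2π)^{-n/2} e^{-‖x‖²/2}`
with respect to Lebesgue measure. -/
noncomputable def gauss (n : ℕ) : Measure (EuclideanSpace ℝ (Fin n)) :=
  volume.withDensity (fun x => ENNReal.ofReal ((2 * π) ^ (-(n : ℝ) / 2) * Real.exp (-‖x‖ ^ 2 / 2)))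

/-! Exponential Chebyshev bound. On `B(r)` one has `e^{-‖x‖²/2} ≤ e^{(l-1)r²/2} e^{-l‖x‖²/2}` for
every `l ≥ 1`, and integrating the right side over all of `ℝⁿ` gives
`γₙ(B(r)) ≤ e^{(l-1)r²/2} l^{-n/2}`. The choice `l = n/r²` turns this into
`(r/√n)ⁿ e^{(n-r²)/2}`, and `t ≤ e^{t-1}` at `t = r/√n` bounds it by `e^{-(√n-r)²/2}`. -/

open Metric

section
variable {V : Type*} [NormedAddCommGroup V] [InnerProductSpace ℝ V] [FiniteDimensional ℝ V]
  [MeasurableSpace V] [BorelSpace V]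

theorem integrable_rexp_neg_mul_sq_norm {b : ℝ} (hb : 0 < b) :
    Integrable (fun v : V => rexp (-b * ‖v‖ ^ 2)) :=
  .of_integral_ne_zero <| by
    rw [GaussianFourier.integral_rexp_neg_mul_sq_norm hb]; positivity

theorem lintegral_rexp_neg_mul_sq_norm {b : ℝ} (hb : 0 < b) :
    ∫⁻ v : V, ENNReal.ofReal (rexp (-b * ‖v‖ ^ 2)) =
      ENNReal.ofReal ((π / b) ^ (Module.finrank ℝ V / 2 : ℝ)) := by
  rw [← ofReal_integral_eq_lintegral_ofReal (integrable_rexp_neg_mul_sq_norm hb)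
    (.of_forall fun v => (exp_pos _).le), GaussianFourier.integral_rexp_neg_mul_sq_norm hb]

end

theorem gauss_singleton {n : ℕ} (hn : n ≠ 0) (x : EuclideanSpace ℝ (Fin n)) : gauss n {x} = 0 :=
  have : Nonempty (Fin n) := ⟨⟨0, Nat.pos_of_ne_zero hn⟩⟩
  show volume.withDensity _ {x} = 0 from measure_singleton x

theorem gauss_closedBall_le (n : ℕ) (r : ℝ) {l : ℝ} (hl : 1 ≤ l) :
    gauss n (closedBall 0 r) ≤ ENNReal.ofReal (exp ((l - 1) * r ^ 2 / 2) * l ^ (-(n : ℝ) / 2)) := by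
  set c := (2 * π) ^ (-(n : ℝ) / 2)
  have hpt : ∀ x ∈ closedBall (0 : EuclideanSpace ℝ (Fin n)) r,
      c * exp (-‖x‖ ^ 2 / 2) ≤ exp ((l - 1) * r ^ 2 / 2) * c * exp (-(l / 2) * ‖x‖ ^ 2) := by
    intro x hx
    have hxr : ‖x‖ ^ 2 ≤ r ^ 2 := by
      have := mem_closedBall_zero_iff.mp hx
      nlinarith [norm_nonneg x]
    rw [mul_comm (exp _) c, mul_assoc, ← exp_add]
    gcongr
    nlinarith
  have hmass : c * (π / (l / 2)) ^ ((n : ℝ) / 2) = l ^ (-(n : ℝ) / 2) := by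
    rw [show π / (l / 2) = 2 * π * l⁻¹ by field_simp, mul_rpow (by positivity) (by positivity),
      ← mul_assoc, ← rpow_add (by positivity), neg_div, neg_add_cancel, rpow_zero, one_mul,
      inv_rpow (by positivity), rpow_neg (by positivity)]
  rw [gauss, withDensity_apply _ isClosed_closedBall.measurableSet]
  calc ∫⁻ x in closedBall (0 : EuclideanSpace ℝ (Fin n)) r, ENNReal.ofReal (c * exp (-‖x‖ ^ 2 / 2))
      ≤ ∫⁻ x in closedBall 0 r, ENNReal.ofReal (exp ((l - 1) * r ^ 2 / 2) * c) *
          ENNReal.ofReal (exp (-(l / 2) * ‖x‖ ^ 2)) :=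
        setLIntegral_mono (by fun_prop) fun x hx => by
          rw [← ENNReal.ofReal_mul (by positivity)]
          exact ENNReal.ofReal_le_ofReal (hpt x hx)
    _ ≤ ∫⁻ x, ENNReal.ofReal (exp ((l - 1) * r ^ 2 / 2) * c) *
          ENNReal.ofReal (exp (-(l / 2) * ‖x‖ ^ 2)) := setLIntegral_le_lintegral _ _
    _ = ENNReal.ofReal (exp ((l - 1) * r ^ 2 / 2) * c) *
          ENNReal.ofReal ((π / (l / 2)) ^ ((n : ℝ) / 2)) := by
        rw [lintegral_const_mul' _ _ ENNReal.ofReal_ne_top,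
          lintegral_rexp_neg_mul_sq_norm (by positivity), finrank_euclideanSpace_fin]
    _ = _ := by rw [← ENNReal.ofReal_mul (by positivity), mul_assoc, hmass]

theorem pow_div_sqrt_mul_exp_le (n : ℕ) {r : ℝ} (hr : 0 ≤ r) :
    (r / √n) ^ n * exp ((n - r ^ 2) / 2) ≤ exp (-(√n - r) ^ 2 / 2) := by
  have hs : √n ^ 2 = n := sq_sqrt n.cast_nonneg
  have hmul : (n : ℝ) * (r / √n) = √n * r := by
    rcases eq_or_ne n 0 with rfl | hn
    · simp
    · have : √n ≠ 0 := by positivity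
      field_simp
      linear_combination -r * hs
  have hpow : (r / √n) ^ n ≤ exp (√n * r - n) :=
    calc (r / √n) ^ n ≤ exp (r / √n - 1) ^ n :=
          pow_le_pow_left₀ (by positivity) (by linarith [add_one_le_exp (r / √n - 1)]) n
      _ = exp (√n * r - n) := by rw [← exp_nat_mul, mul_sub, hmul, mul_one]
  calc (r / √n) ^ n * exp ((n - r ^ 2) / 2) ≤ exp (√n * r - n) * exp ((n - r ^ 2) / 2) := by
        gcongr
    _ = exp (-(√n - r) ^ 2 / 2) := by
        rw [← exp_add]; congr 1; linear_combination (1 / 2 : ℝ) * hs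

theorem gauss_closedBall_le_exp (n : ℕ) {r : ℝ} (hr : 0 < r) (hrn : r ≤ √n) :
    gauss n (closedBall 0 r) ≤ ENNReal.ofReal (exp (-(√n - r) ^ 2 / 2)) := by
  have hsr : r ^ 2 ≤ n := by nlinarith [sq_sqrt n.cast_nonneg]
  have hn : (0 : ℝ) < n := (pow_pos hr 2).trans_le hsr
  have hpow : ((n : ℝ) / r ^ 2) ^ (-(n : ℝ) / 2) = (r / √n) ^ n := by
    rw [show (n : ℝ) / r ^ 2 = (√n / r) ^ 2 by rw [div_pow, sq_sqrt hn.le], ← rpow_natCast _ 2,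
      ← rpow_mul (by positivity), show ((2 : ℕ) : ℝ) * (-(n : ℝ) / 2) = -n by push_cast; ring,
      rpow_neg (by positivity), rpow_natCast, ← inv_pow, inv_div]
  have hexp : ((n : ℝ) / r ^ 2 - 1) * r ^ 2 / 2 = (n - r ^ 2) / 2 := by field_simp
  calc gauss n (closedBall 0 r)
      ≤ ENNReal.ofReal (exp ((n / r ^ 2 - 1) * r ^ 2 / 2) * (n / r ^ 2) ^ (-(n : ℝ) / 2)) :=
        gauss_closedBall_le n r ((one_le_div (by positivity)).2 hsr)
    _ ≤ ENNReal.ofReal (exp (-(√n - r) ^ 2 / 2)) := by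
        rw [hpow, hexp, mul_comm]
        exact ENNReal.ofReal_le_ofReal (pow_div_sqrt_mul_exp_le n hr.le)

theorem stmt0 (n : ℕ) (η : ℝ) (hη : 0 < η) :
    gauss n (Metric.closedBall 0 (Real.sqrt n - η)) ≤ ENNReal.ofReal (Real.exp (-η ^ 2 / 2)) := by
  rcases lt_trichotomy (√n - η) 0 with hr | hr | hr
  · simp [closedBall_eq_empty.2 hr]
  · have hn : n ≠ 0 := by rintro rfl; simp at hr; linarith
    rw [hr, closedBall_zero, gauss_singleton hn]
    exact bot_le
  · simpa using gauss_closedBall_le_exp n hr (by linarith)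
end

section
/- If X is a random variable distributed as the standard Gaussian measure on ℝⁿ restricted and normalized to a measurable set K, then ‖E[X]‖ ≤ 4√(log(2/γ_n(K))). -/
open MeasureTheory Real
open scoped RealInnerProductSpace Pointwise

/-- The Gaussian mean-width `w(K) = E[sup_{x ∈ K} ⟨Γ, x⟩]` of a set `K ⊆ ℝⁿ`. -/
noncomputable def meanWidth (n : ℕ) (K : Set (EuclideanSpace ℝ (Fin n))) : ℝ :=
  ∫ g, sSup ((fun x => ⟪g, x⟫) '' K) ∂(gauss n)

/-!
The density of `gauss n` has characteristic function `exp (-‖t‖² / 2)`, so `gauss n` is Mathlib's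
`stdGaussian`, and every marginal `x ↦ ⟪θ, x⟫` with `‖θ‖ = 1` is `1`-subgaussian.
For a `1`-subgaussian `Y` and `t > 0`, integrating `y ≤ t + t⁻¹ exp (t y - t²)` (which is
`exp z ≥ 1 + z`) over `K` gives `∫_K Y ≤ t γ(K) + t⁻¹ exp (-t² / 2)`. Choosing `t` with
`exp (-t² / 2) = γ(K) / 2` yields `⟪θ, E X⟫ ≤ t + 1 / (2t) ≤ 4 √(log (2 / γ(K)))`, and taking `θ`
in the direction of `E X` bounds its norm.
-/

open ProbabilityTheory
open scoped NNReal

lemma sqrt_two_mul_add_inv_le {L : ℝ} (hL : log 2 ≤ L) :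
    √(2 * L) + (2 * √(2 * L))⁻¹ ≤ 4 * √L := by
  have hL0 : 1 / 4 < L := by linarith [log_two_gt_d9]
  have hsq : √L ^ 2 = L := sq_sqrt (by linarith)
  have hs : √L ≤ √(2 * L) := sqrt_le_sqrt (by linarith)
  have ht : √(2 * L) ≤ 2 * √L := sqrt_le_iff.2 ⟨by positivity, by rw [mul_pow, hsq]; linarith⟩
  have hinv : (2 * √(2 * L))⁻¹ ≤ 2 * √L := by
    rw [inv_le_iff_one_le_mul₀ (by positivity)]
    nlinarith
  linarith

namespace ProbabilityTheory.HasSubgaussianMGF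

variable {Ω : Type*} {mΩ : MeasurableSpace Ω} {μ : Measure Ω} {Y : Ω → ℝ}

lemma setIntegral_le {c : ℝ≥0} (h : HasSubgaussianMGF Y c μ) (K : Set Ω) {t : ℝ} (ht : 0 < t)
    (s : ℝ) : ∫ ω in K, Y ω ∂μ ≤ s * μ.real K + t⁻¹ * rexp (c * t ^ 2 / 2 - t * s) := by
  -- `exp (0 * Y) = 1` is integrable
  have : IsFiniteMeasure μ := by
    simpa [integrable_const_iff] using h.integrable_exp_mul 0
  have hexp := h.integrable_exp_mul t
  have hbound := (integrable_const s).add ((hexp.const_mul (rexp (-(t * s)))).const_mul t⁻¹)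
  have hpt (ω : Ω) : Y ω ≤ s + t⁻¹ * (rexp (-(t * s)) * rexp (t * Y ω)) := by
    rw [← exp_add, ← sub_le_iff_le_add', le_inv_mul_iff₀ ht]
    linarith [add_one_le_exp (-(t * s) + t * Y ω)]
  calc ∫ ω in K, Y ω ∂μ
      ≤ ∫ ω in K, s + t⁻¹ * (rexp (-(t * s)) * rexp (t * Y ω)) ∂μ :=
        setIntegral_mono h.integrable.integrableOn hbound.integrableOn hpt
    _ = s * μ.real K + t⁻¹ * (rexp (-(t * s)) * ∫ ω in K, rexp (t * Y ω) ∂μ) := by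
        rw [integral_add (integrable_const s).integrableOn
            ((hexp.const_mul _).const_mul _).integrableOn,
          setIntegral_const, integral_const_mul, integral_const_mul, smul_eq_mul, mul_comm]
    _ ≤ s * μ.real K + t⁻¹ * (rexp (-(t * s)) * mgf Y μ t) := by
        gcongr
        exact setIntegral_le_integral hexp (.of_forall fun _ => (exp_pos _).le)
    _ ≤ s * μ.real K + t⁻¹ * (rexp (-(t * s)) * rexp (c * t ^ 2 / 2)) := by
        gcongr
        exact h.mgf_le t
    _ = s * μ.real K + t⁻¹ * rexp (c * t ^ 2 / 2 - t * s) := by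
        rw [← exp_add, neg_add_eq_sub]

lemma setIntegral_le_mul_sqrt_log (h : HasSubgaussianMGF Y 1 μ) {K : Set Ω}
    (hK : 0 < μ.real K) (hK1 : μ.real K ≤ 1) :
    ∫ ω in K, Y ω ∂μ ≤ μ.real K * (4 * √(log (2 / μ.real K))) := by
  set m := μ.real K
  set L := log (2 / m)
  have hL : log 2 ≤ L := log_le_log two_pos (by rw [le_div_iff₀ hK]; linarith)
  have hL0 : 0 < L := (log_pos one_lt_two).trans_le hL
  set t := √(2 * L)
  have ht : 0 < t := sqrt_pos.2 (by positivity)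
  -- `t` is chosen so that `exp (-t ^ 2 / 2) = m / 2`
  have hexp : rexp ((1 : ℝ≥0) * t ^ 2 / 2 - t * t) = m / 2 := by
    rw [mul_self_sqrt (by positivity), sq_sqrt (by positivity), NNReal.coe_one,
      show 1 * (2 * L) / 2 - 2 * L = -L by ring, exp_neg, exp_log (by positivity), inv_div]
  calc ∫ ω in K, Y ω ∂μ ≤ t * m + t⁻¹ * rexp ((1 : ℝ≥0) * t ^ 2 / 2 - t * t) :=
        h.setIntegral_le K ht t
    _ = m * (t + (2 * t)⁻¹) := by rw [hexp]; field_simp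
    _ ≤ m * (4 * √L) := by gcongr; exact sqrt_two_mul_add_inv_le hL

end ProbabilityTheory.HasSubgaussianMGF

section InnerProductSpace

variable {E : Type*} [NormedAddCommGroup E] [InnerProductSpace ℝ E]

lemma norm_le_of_forall_inner_le {v : E} {C : ℝ} (h : ∀ θ : E, ‖θ‖ = 1 → ⟪θ, v⟫ ≤ C)
    (hC : 0 ≤ C) : ‖v‖ ≤ C := by
  rcases eq_or_ne v 0 with rfl | hv
  · simpa using hC
  have hθ := h (‖v‖⁻¹ • v) (norm_smul_inv_norm hv)
  rwa [real_inner_smul_left, real_inner_self_eq_norm_sq, pow_two,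
    inv_mul_cancel_left₀ (norm_ne_zero_iff.2 hv)] at hθ

variable [MeasurableSpace E]

theorem norm_setAverage_le_of_forall_hasSubgaussianMGF_inner [CompleteSpace E] {μ : Measure E}
    [IsProbabilityMeasure μ] (hid : Integrable id μ)
    (hμ : ∀ θ : E, ‖θ‖ = 1 → HasSubgaussianMGF (fun x => ⟪θ, x⟫) 1 μ) {K : Set E}
    (hK : 0 < μ K) : ‖⨍ x in K, x ∂μ‖ ≤ 4 * √(log (2 / μ.real K)) := by
  have hm : 0 < μ.real K := ENNReal.toReal_pos hK.ne' (measure_ne_top μ K)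
  refine norm_le_of_forall_inner_le (fun θ hθ => ?_) (by positivity)
  rw [setAverage_eq, real_inner_smul_right,
    ← integral_inner (f := fun x : E => x) hid.integrableOn θ, inv_mul_le_iff₀ hm]
  exact (hμ θ hθ).setIntegral_le_mul_sqrt_log hm measureReal_le_one

variable [FiniteDimensional ℝ E] [BorelSpace E]

lemma hasSubgaussianMGF_inner_stdGaussian (θ : E) :
    HasSubgaussianMGF (fun x => ⟪θ, x⟫) (‖θ‖₊ ^ 2) (stdGaussian E) := by
  have hmap : (stdGaussian E).map (fun x => ⟪θ, x⟫) = gaussianReal 0 (‖θ‖₊ ^ 2) := by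
    have h := IsGaussian.map_eq_gaussianReal (μ := stdGaussian E) (innerSL ℝ θ)
    rw [integral_strongDual_stdGaussian, variance_dual_stdGaussian, innerSL_apply_norm] at h
    rwa [← coe_nnnorm, ← NNReal.coe_pow, Real.toNNReal_coe] at h
  have hmgf := mgf_gaussianReal hmap
  exact ⟨fun t => mgf_pos_iff.1 (hmgf t ▸ exp_pos _), fun t => by simp [hmgf]⟩

lemma integrable_exp_neg_mul_sq_norm {b : ℝ} (hb : 0 < b) :
    Integrable (fun x : E => rexp (-b * ‖x‖ ^ 2)) :=
  .of_integral_ne_zero (by rw [GaussianFourier.integral_rexp_neg_mul_sq_norm hb]; positivity)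

end InnerProductSpace

section
variable {n : ℕ}

instance : IsFiniteMeasure (gauss n) := by
  have h := (integrable_exp_neg_mul_sq_norm (E := EuclideanSpace ℝ (Fin n)) (b := 2⁻¹)
    (by norm_num)).const_mul ((2 * π) ^ (-(n : ℝ) / 2))
  simp_rw [neg_mul, inv_mul_eq_div, ← neg_div] at h
  exact isFiniteMeasure_withDensity_ofReal h.2

open Complex in
lemma charFun_gauss (t : EuclideanSpace ℝ (Fin n)) :
    charFun (gauss n) t = cexp (-‖t‖ ^ 2 / 2) := by
  rw [charFun_apply, gauss, integral_withDensity_eq_integral_toReal_smul (by fun_prop)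
    (.of_forall fun _ => ENNReal.ofReal_lt_top)]
  have hx (x : EuclideanSpace ℝ (Fin n)) :
      (ENNReal.ofReal ((2 * π) ^ (-(n : ℝ) / 2) * rexp (-‖x‖ ^ 2 / 2))).toReal •
          cexp (⟪x, t⟫ * I) =
        ((2 * π) ^ (-(n : ℝ) / 2) : ℝ) * cexp (-2⁻¹ * ‖x‖ ^ 2 + I * ⟪t, x⟫) := by
    rw [ENNReal.toReal_ofReal (by positivity), real_smul, ofReal_mul, ofReal_exp, mul_assoc,
      ← Complex.exp_add, real_inner_comm]
    push_cast
    ring_nf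
  have hpow : (π / 2⁻¹ : ℂ) ^ ((n : ℂ) / 2) = (((2 * π) ^ ((n : ℝ) / 2) : ℝ) : ℂ) := by
    rw [ofReal_cpow (by positivity)]
    push_cast
    ring_nf
  simp_rw [hx, integral_const_mul,
    GaussianFourier.integral_cexp_neg_mul_sq_norm_add (by norm_num : 0 < (2⁻¹ : ℂ).re)]
  rw [finrank_euclideanSpace_fin, ← mul_assoc, hpow, ← ofReal_mul, ← rpow_add (by positivity),
    neg_div, neg_add_cancel, rpow_zero, ofReal_one, one_mul, I_sq]
  ring_nf

theorem gauss_eq_stdGaussian : gauss n = stdGaussian (EuclideanSpace ℝ (Fin n)) :=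
  Measure.ext_of_charFun (funext fun t => by rw [charFun_gauss, charFun_stdGaussian])

end

theorem stmt11_general (n : ℕ) (K : Set (EuclideanSpace ℝ (Fin n)))
    (hpos : 0 < gauss n K) :
    ‖(gauss n K).toReal⁻¹ • ∫ x in K, x ∂(gauss n)‖ ≤
      4 * Real.sqrt (Real.log (2 / (gauss n K).toReal)) := by
  rw [gauss_eq_stdGaussian] at hpos ⊢
  have hmarginal (θ : EuclideanSpace ℝ (Fin n)) (hθ : ‖θ‖ = 1) :
      HasSubgaussianMGF (fun x => ⟪θ, x⟫) 1 (stdGaussian _) := by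
    simpa [show ‖θ‖₊ = 1 from Subtype.ext hθ] using hasSubgaussianMGF_inner_stdGaussian θ
  have h := norm_setAverage_le_of_forall_hasSubgaussianMGF_inner IsGaussian.integrable_id
    hmarginal hpos
  rwa [setAverage_eq] at h

theorem stmt11 (n : ℕ) (K : Set (EuclideanSpace ℝ (Fin n))) (hm : MeasurableSet K)
    (hpos : 0 < gauss n K) :
    ‖(gauss n K).toReal⁻¹ • ∫ x in K, x ∂(gauss n)‖ ≤
      4 * Real.sqrt (Real.log (2 / (gauss n K).toReal)) :=
  stmt11_general n K hpos
end

section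
/- If X is distributed as the standard Gaussian measure restricted and normalized to a measurable set K ⊂ ℝⁿ, then E[‖X‖²] ≥ n − 6√n · √(2 log(4/γ_n(K))). -/
/-!
For `λ > 0` and real `a, y`, `x ≤ exp (x - 1)` gives `a - y ≤ exp (λ (a - y) - 1) / λ`. Taking
`y = ‖x‖²` and integrating over `K`,
`a γ(K) ≤ ∫_K ‖x‖² + exp (λ a - 1) / λ · E exp (-λ ‖Γ‖²)`,
and the Gaussian Laplace transform `E exp (-λ ‖Γ‖²) = (1 + 2λ)^(-n/2)` is explicit.
With `λ = t / (2√n)`, `a = n - 2√n t` and `log (1 + u) ≥ u - u²`, the error term is at most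
`(2√n / t) exp (-1 - t² / 2)`. For `t = √(2 log (4 / γ(K))) ≥ 1` this is at most
`√n γ(K) / (2t) ≤ 4√n t γ(K)`.
-/

open MeasureTheory Real
open scoped RealInnerProductSpace Pointwise

noncomputable def gaussDensity (n : ℕ) (x : EuclideanSpace ℝ (Fin n)) : ℝ :=
  (2 * π) ^ (-(n : ℝ) / 2) * rexp (-‖x‖ ^ 2 / 2)

lemma gaussDensity_nonneg (n : ℕ) (x : EuclideanSpace ℝ (Fin n)) : 0 ≤ gaussDensity n x := by
  unfold gaussDensity; positivity

lemma measurable_gaussDensity (n : ℕ) : Measurable (gaussDensity n) := by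
  unfold gaussDensity; fun_prop

lemma gauss_eq_withDensity (n : ℕ) :
    gauss n = volume.withDensity fun x => ENNReal.ofReal (gaussDensity n x) := rfl

lemma integral_gauss (n : ℕ) (f : EuclideanSpace ℝ (Fin n) → ℝ) :
    ∫ x, f x ∂gauss n = ∫ x, gaussDensity n x * f x := by
  rw [gauss_eq_withDensity, integral_withDensity_eq_integral_toReal_smul
    (measurable_gaussDensity n).ennreal_ofReal (ae_of_all _ fun _ => ENNReal.ofReal_lt_top)]
  simp_rw [ENNReal.toReal_ofReal (gaussDensity_nonneg n _), smul_eq_mul]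

lemma integrable_gauss_iff {n : ℕ} {f : EuclideanSpace ℝ (Fin n) → ℝ} :
    Integrable f (gauss n) ↔ Integrable (fun x => gaussDensity n x * f x) := by
  rw [gauss_eq_withDensity, integrable_withDensity_iff_integrable_smul'
    (measurable_gaussDensity n).ennreal_ofReal (ae_of_all _ fun _ => ENNReal.ofReal_lt_top)]
  simp_rw [ENNReal.toReal_ofReal (gaussDensity_nonneg n _), smul_eq_mul]

lemma integral_gaussDensity_mul_exp_neg_mul_norm_sq (n : ℕ) {b : ℝ} (hb : -1 / 2 < b) :
    ∫ x, gaussDensity n x * rexp (-(b * ‖x‖ ^ 2)) = (1 + 2 * b) ^ (-(n : ℝ) / 2) := by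
  have hb' : 0 < b + 1 / 2 := by linarith
  simp_rw [gaussDensity, mul_assoc, ← exp_add, show ∀ y : ℝ, -y / 2 + -(b * y) = -(b + 1 / 2) * y from
    fun y => by ring]
  rw [integral_const_mul, GaussianFourier.integral_rexp_neg_mul_sq_norm hb',
    finrank_euclideanSpace_fin, show π / (b + 1 / 2) = 2 * π / (1 + 2 * b) by field_simp; ring,
    div_rpow (by positivity) (by linarith), ← mul_div_assoc, ← rpow_add (by positivity),
    neg_div, neg_add_cancel, rpow_zero, one_div, ← rpow_neg (by linarith)]

lemma integrable_exp_neg_mul_norm_sq_gauss (n : ℕ) {b : ℝ} (hb : -1 / 2 < b) :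
    Integrable (fun x : EuclideanSpace ℝ (Fin n) => rexp (-(b * ‖x‖ ^ 2))) (gauss n) :=
  integrable_gauss_iff.2 <| .of_integral_ne_zero <| by
    rw [integral_gaussDensity_mul_exp_neg_mul_norm_sq n hb]
    exact (rpow_pos_of_pos (by linarith) _).ne'

lemma integral_exp_neg_mul_norm_sq_gauss (n : ℕ) {b : ℝ} (hb : -1 / 2 < b) :
    ∫ x, rexp (-(b * ‖x‖ ^ 2)) ∂gauss n = (1 + 2 * b) ^ (-(n : ℝ) / 2) := by
  rw [integral_gauss, integral_gaussDensity_mul_exp_neg_mul_norm_sq n hb]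

instance isProbabilityMeasure_gauss (n : ℕ) : IsProbabilityMeasure (gauss n) := by
  have h := integrable_exp_neg_mul_norm_sq_gauss n (b := 0) (by norm_num)
  have h' := integral_exp_neg_mul_norm_sq_gauss n (b := 0) (by norm_num)
  simp only [zero_mul, neg_zero, exp_zero, mul_zero, add_zero, one_rpow] at h h'
  have := (integrable_const_iff.1 h).resolve_left one_ne_zero
  rw [integral_const, smul_eq_mul, mul_one, measureReal_def, ENNReal.toReal_eq_one_iff] at h'
  exact ⟨h'⟩

lemma integrable_norm_sq_gauss (n : ℕ) :
    Integrable (fun x : EuclideanSpace ℝ (Fin n) => ‖x‖ ^ 2) (gauss n) := by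
  refine ((integrable_exp_neg_mul_norm_sq_gauss n (b := -1 / 4) (by norm_num)).const_mul 4).mono'
    (by fun_prop) (ae_of_all _ fun x => ?_)
  rw [norm_of_nonneg (by positivity), show -(-1 / 4 * ‖x‖ ^ 2) = ‖x‖ ^ 2 / 4 by ring]
  linarith [add_one_le_exp (‖x‖ ^ 2 / 4)]

lemma le_add_exp_mul_exp_neg {l : ℝ} (hl : 0 < l) (a y : ℝ) :
    a ≤ y + rexp (l * a - 1) / l * rexp (-(l * y)) := by
  have hprod : rexp (l * a - 1) / l * rexp (-(l * y)) = rexp (l * (a - y) - 1) / l := by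
    rw [div_mul_eq_mul_div, ← exp_add]; ring_nf
  rw [hprod, ← sub_le_iff_le_add', le_div_iff₀ hl]
  linarith [add_one_le_exp (l * (a - y) - 1)]

lemma mul_measureReal_le_setIntegral_add_integral_exp {α : Type*} [MeasurableSpace α]
    {μ : Measure α} [IsFiniteMeasure μ] {f : α → ℝ} {s : Set α} {l : ℝ} (hl : 0 < l) (a : ℝ)
    (hf : IntegrableOn f s μ) (hexp : Integrable (fun x => rexp (-(l * f x))) μ) :
    a * μ.real s ≤ ∫ x in s, f x ∂μ + rexp (l * a - 1) / l * ∫ x, rexp (-(l * f x)) ∂μ := by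
  have hexp_s : ∫ x in s, rexp (-(l * f x)) ∂μ ≤ ∫ x, rexp (-(l * f x)) ∂μ :=
    setIntegral_le_integral hexp (ae_of_all _ fun _ => (exp_pos _).le)
  calc a * μ.real s = ∫ _ in s, a ∂μ := by rw [setIntegral_const, smul_eq_mul, mul_comm]
    _ ≤ ∫ x in s, f x + rexp (l * a - 1) / l * rexp (-(l * f x)) ∂μ :=
        setIntegral_mono (integrableOn_const (measure_ne_top μ s))
          (hf.add (hexp.const_mul _).integrableOn) fun x => le_add_exp_mul_exp_neg hl a (f x)
    _ = ∫ x in s, f x ∂μ + rexp (l * a - 1) / l * ∫ x in s, rexp (-(l * f x)) ∂μ := by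
        rw [integral_add hf (hexp.const_mul _).integrableOn, integral_const_mul]
    _ ≤ _ := by gcongr

lemma one_add_rpow_neg_le_exp {u m : ℝ} (hu : 0 ≤ u) (hm : 0 ≤ m) :
    (1 + u) ^ (-m) ≤ rexp (-m * (u - u ^ 2)) := by
  have hlog : u - u ^ 2 ≤ log (1 + u) := by
    refine le_trans ?_ (one_sub_inv_le_log_of_pos (by linarith))
    rw [show 1 - (1 + u)⁻¹ = u / (1 + u) by field_simp; ring, le_div_iff₀ (by linarith)]
    nlinarith [pow_nonneg hu 3]
  rw [rpow_def_of_pos (by linarith), mul_comm]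
  exact exp_le_exp.2 (by nlinarith)

lemma exp_div_mul_one_add_rpow_le {n t : ℝ} (hn : 0 < n) (ht : 0 < t) :
    rexp (t / (2 * √n) * (n - 2 * √n * t) - 1) / (t / (2 * √n)) *
        (1 + 2 * (t / (2 * √n))) ^ (-n / 2) ≤ 2 * √n / t * rexp (-1 - t ^ 2 / 2) := by
  have hs : 0 < √n := sqrt_pos.2 hn
  have hs2 : √n ^ 2 = n := sq_sqrt hn.le
  calc _ ≤ rexp (t / (2 * √n) * (n - 2 * √n * t) - 1) / (t / (2 * √n)) *
          rexp (-(n / 2) * (2 * (t / (2 * √n)) - (2 * (t / (2 * √n))) ^ 2)) := by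
        rw [neg_div]
        gcongr
        exact one_add_rpow_neg_le_exp (by positivity) (by positivity)
    _ = 2 * √n / t * rexp (-1 - t ^ 2 / 2) := by
        have hexponent : t / (2 * √n) * (n - 2 * √n * t) - 1 +
            -(n / 2) * (2 * (t / (2 * √n)) - (2 * (t / (2 * √n))) ^ 2) = -1 - t ^ 2 / 2 := by
          field_simp
          linear_combination (-t ^ 2) * hs2
        rw [div_mul_eq_mul_div, ← exp_add, hexponent]
        field_simp

lemma sub_mul_gauss_real_le_setIntegral_norm_sq_add {n : ℕ} (K : Set (EuclideanSpace ℝ (Fin n)))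
    {t : ℝ} (hn : 0 < n) (ht : 0 < t) :
    (n - 2 * √n * t) * (gauss n).real K ≤
      ∫ x in K, ‖x‖ ^ 2 ∂gauss n + 2 * √n / t * rexp (-1 - t ^ 2 / 2) := by
  have hl : 0 < t / (2 * √n) := by positivity
  have h := mul_measureReal_le_setIntegral_add_integral_exp (s := K) hl (n - 2 * √n * t)
    (integrable_norm_sq_gauss n).integrableOn
    (integrable_exp_neg_mul_norm_sq_gauss n (by linarith))
  rw [integral_exp_neg_mul_norm_sq_gauss n (by linarith)] at h
  linarith [exp_div_mul_one_add_rpow_le (Nat.cast_pos.2 hn) ht]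

theorem stmt12_general (n : ℕ) (K : Set (EuclideanSpace ℝ (Fin n)))
    (hpos : 0 < gauss n K) :
    (n : ℝ) - 6 * Real.sqrt n * Real.sqrt (2 * Real.log (4 / (gauss n K).toReal)) ≤
      (gauss n K).toReal⁻¹ * ∫ x in K, ‖x‖ ^ 2 ∂(gauss n) := by
  set g := (gauss n K).toReal
  have hg0 : 0 < g := ENNReal.toReal_pos hpos.ne' (measure_ne_top _ _)
  have hg1 : g ≤ 1 := measureReal_le_one
  rcases n.eq_zero_or_pos with rfl | hn
  · simpa using mul_nonneg (inv_nonneg.2 hg0.le) (integral_nonneg fun x => by positivity)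
  set t := √(2 * log (4 / g))
  have hlog : 1 ≤ log (4 / g) := by
    rw [le_log_iff_exp_le (by positivity), le_div_iff₀ hg0]
    nlinarith [exp_one_lt_d9]
  have ht : 1 ≤ t := one_le_sqrt.2 (by linarith)
  have hexp : rexp (-(t ^ 2 / 2)) = g / 4 := by
    rw [sq_sqrt (by linarith), mul_div_cancel_left₀ _ two_ne_zero, exp_neg, exp_log (by positivity),
      inv_div]
  have hrem : 2 * √n / t * rexp (-1 - t ^ 2 / 2) ≤ 4 * √n * t * g := calc
    _ ≤ 2 * √n / t * (g / 4) := by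
      gcongr
      rw [← hexp]
      exact exp_le_exp.2 (by linarith)
    _ ≤ 4 * √n * t * g := by
      rw [div_mul_eq_mul_div, div_le_iff₀ (by positivity)]
      have hng : 0 ≤ √n * g := mul_nonneg (sqrt_nonneg n) hg0.le
      nlinarith [mul_le_mul_of_nonneg_left (one_le_pow₀ ht : 1 ≤ t ^ 2) hng]
  have h := sub_mul_gauss_real_le_setIntegral_norm_sq_add K hn (by linarith : 0 < t)
  rw [measureReal_def] at h
  rw [inv_mul_eq_div, le_div_iff₀ hg0]
  linarith

theorem stmt12 (n : ℕ) (K : Set (EuclideanSpace ℝ (Fin n))) (hm : MeasurableSet K)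
    (hpos : 0 < gauss n K) :
    (n : ℝ) - 6 * Real.sqrt n * Real.sqrt (2 * Real.log (4 / (gauss n K).toReal)) ≤
      (gauss n K).toReal⁻¹ * ∫ x in K, ‖x‖ ^ 2 ∂(gauss n) :=
  stmt12_general n K hpos
end
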